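/- Suppose G is an r-regular graph such that every open neighborhood induces exactly binom(r,2) - k edges with 1 ≤ k ≤ (r-2)/2, and let v be a vertex. If some vertex w ∈ N[v] has at least (k+1)/3 neighbors outside N[v], then the neighborhood N(w) induces at most binom(r,2) - (r+1-2k)(k+1)/3 edges, and binom(r,2) - (r+1-2k)(k+1)/3 < binom(r,2) - k, a contradiction. Consequently, every vertex of N[v] has fewer than (k+1)/3 neighbors outside N[v]. -/

import Mathlib

private lemma two_choose_two (n : ℕ) : 2 * n.choose 2 = n * n - n := by
  rw [Nat.choose_two_right, Nat.two_mul_div_two_of_even (Nat.even_mul_pred_self n)]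
  rw [← Nat.pred_eq_sub_one, Nat.mul_pred]

/-- Let `G` be `r`-regular with every open neighborhood inducing exactly
`binom(r,2) - k` edges, where `1 ≤ k ≤ (r-2)/2`, and let `v` be a vertex.
Then every vertex `w` of the closed neighborhood `N[v]` has fewer than
`(k+1)/3` neighbors outside `N[v]`. -/
theorem stmt16 {V : Type*} [Fintype V] [DecidableEq V]
    (G : SimpleGraph V) [DecidableRel G.Adj] (r k : ℕ) (hk : 1 ≤ k)
    (hkr : (k : ℝ) ≤ ((r : ℝ) - 2) / 2)
    (hreg : ∀ v, G.degree v = r)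
    (hc : ∀ v, (Finset.univ.filter fun p : V × V =>
        G.Adj v p.1 ∧ G.Adj v p.2 ∧ G.Adj p.1 p.2).card + 2 * k = 2 * r.choose 2)
    (v : V) :
    ∀ w ∈ insert v (G.neighborFinset v),
      (((G.neighborFinset w).filter fun u =>
          u ∉ insert v (G.neighborFinset v)).card : ℝ) < ((k : ℝ) + 1) / 3 := by
  classical
  intro w hw
  by_contra hcon
  push_neg at hcon
  set Nv := insert v (G.neighborFinset v) with hNvdef
  set S := (G.neighborFinset w).filter (fun u => u ∉ Nv) with hSdef
  -- arithmetic consequences of the real hypotheses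
  have hs3 : k + 1 ≤ 3 * S.card := by
    have h1 : ((k : ℝ) + 1) ≤ 3 * (S.card : ℝ) := by linarith
    exact_mod_cast h1
  have hr2 : 2 * k + 2 ≤ r := by
    have h1 : (2 * (k : ℝ) + 2) ≤ (r : ℝ) := by linarith
    exact_mod_cast h1
  -- the number of ordered non-adjacent pairs in any open neighborhood is 2k
  have key : ∀ x : V, (Finset.univ.filter fun p : V × V =>
      G.Adj x p.1 ∧ G.Adj x p.2 ∧ p.1 ≠ p.2 ∧ ¬ G.Adj p.1 p.2).card = 2 * k := by
    intro x
    have hcx := hc x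
    rw [two_choose_two] at hcx
    set P := (Finset.univ.filter fun p : V × V =>
        G.Adj x p.1 ∧ G.Adj x p.2 ∧ G.Adj p.1 p.2) with hP
    set Q := (Finset.univ.filter fun p : V × V =>
        G.Adj x p.1 ∧ G.Adj x p.2 ∧ p.1 ≠ p.2 ∧ ¬ G.Adj p.1 p.2) with hQ
    have hunion : P ∪ Q = (G.neighborFinset x).offDiag := by
      ext p
      simp only [hP, hQ, Finset.mem_union, Finset.mem_filter, Finset.mem_univ,
        true_and, Finset.mem_offDiag, SimpleGraph.mem_neighborFinset]
      constructor
      · rintro (⟨h1, h2, h3⟩ | ⟨h1, h2, h3, h4⟩)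
        · exact ⟨h1, h2, h3.ne⟩
        · exact ⟨h1, h2, h3⟩
      · rintro ⟨h1, h2, h3⟩
        by_cases hadj : G.Adj p.1 p.2
        · exact Or.inl ⟨h1, h2, hadj⟩
        · exact Or.inr ⟨h1, h2, h3, hadj⟩
    have hdisj : Disjoint P Q := by
      rw [Finset.disjoint_left]
      intro p hp hq
      simp only [hP, Finset.mem_filter] at hp
      simp only [hQ, Finset.mem_filter] at hq
      exact hq.2.2.2.2 hp.2.2.2
    have hcards : P.card + Q.card = r * r - r := by
      rw [← Finset.card_union_of_disjoint hdisj, hunion, Finset.offDiag_card,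
        G.card_neighborFinset_eq_degree, hreg x]
    omega
  -- basic facts about Nv
  have hvnot : v ∉ G.neighborFinset v := by
    simp [SimpleGraph.mem_neighborFinset]
  have hNvcard : Nv.card = r + 1 := by
    rw [hNvdef, Finset.card_insert_of_notMem hvnot,
      G.card_neighborFinset_eq_degree, hreg v]
  -- R : the vertices of Nv adjacent to every other vertex of Nv
  set R := Nv.filter (fun u => ∀ x ∈ Nv, x ≠ u → G.Adj u x) with hRdef
  -- each vertex of R has neighborhood exactly Nv.erase u
  have hA : ∀ u ∈ R, G.neighborFinset u = Nv.erase u := by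
    intro u hu
    rw [hRdef, Finset.mem_filter] at hu
    obtain ⟨huNv, hall⟩ := hu
    have hsub : Nv.erase u ⊆ G.neighborFinset u := by
      intro x hx
      rw [Finset.mem_erase] at hx
      rw [SimpleGraph.mem_neighborFinset]
      exact hall x hx.2 hx.1
    have hcard : (G.neighborFinset u).card ≤ (Nv.erase u).card := by
      rw [Finset.card_erase_of_mem huNv, hNvcard, G.card_neighborFinset_eq_degree,
        hreg u]
      omega
    exact (Finset.eq_of_subset_of_card_le hsub hcard).symm
  -- lower bound on R.card
  have hRcard : r + 1 ≤ R.card + 2 * k := by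
    set B := Nv.filter (fun u => ¬ ∀ x ∈ Nv, x ≠ u → G.Adj u x) with hBdef
    have hsplit : R.card + B.card = r + 1 := by
      rw [hRdef, hBdef, Finset.card_filter_add_card_filter_not, hNvcard]
    set Qv := (Finset.univ.filter fun p : V × V =>
        G.Adj v p.1 ∧ G.Adj v p.2 ∧ p.1 ≠ p.2 ∧ ¬ G.Adj p.1 p.2) with hQv
    set wit : V → V := fun u =>
      if h : ∃ x, x ∈ Nv ∧ x ≠ u ∧ ¬ G.Adj u x then h.choose else v with hwit
    have hBQ : B.card ≤ Qv.card := by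
      apply Finset.card_le_card_of_injOn (fun u => (u, wit u))
      · intro u hu
        simp only [Finset.mem_coe, hBdef, Finset.mem_filter] at hu
        obtain ⟨huNv, hbad⟩ := hu
        push_neg at hbad
        obtain ⟨x, hxNv, hxne, hxnadj⟩ := hbad
        have hex : ∃ x, x ∈ Nv ∧ x ≠ u ∧ ¬ G.Adj u x := ⟨x, hxNv, hxne, hxnadj⟩
        have hspec := hex.choose_spec
        have hwitu : wit u = hex.choose := by
          rw [hwit]; exact dif_pos hex
        obtain ⟨hyNv, hyne, hynadj⟩ := hspec
        -- u ≠ v since v is adjacent to all of its neighbors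
        have huv : u ≠ v := by
          intro h
          subst h
          rcases Finset.mem_insert.mp hyNv with h | h
          · exact hyne h
          · exact hynadj ((SimpleGraph.mem_neighborFinset G u hex.choose).mp h)
        have huadj : G.Adj v u := by
          rcases Finset.mem_insert.mp huNv with h | h
          · exact absurd h huv
          · exact (SimpleGraph.mem_neighborFinset G v u).mp h
        have hyadj : G.Adj v (wit u) := by
          rw [hwitu]
          rcases Finset.mem_insert.mp hyNv with h | h
          · exfalso
            apply hynadj
            rw [h]
            exact G.adj_symm huadj
          · exact (SimpleGraph.mem_neighborFinset G v hex.choose).mp h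
        simp only [Finset.mem_coe, hQv, Finset.mem_filter]
        refine ⟨Finset.mem_univ _, huadj, hyadj, ?_, ?_⟩
        · rw [hwitu]; exact fun h => hyne h.symm
        · rw [hwitu]; exact hynadj
      · intro a _ b _ hab
        exact (Prod.mk.injEq _ _ _ _ ▸ hab).1
    have hQvcard : Qv.card = 2 * k := key v
    omega
  -- w is not in R since it has a neighbor outside Nv
  have hScard1 : 1 ≤ S.card := by omega
  obtain ⟨a, ha⟩ := Finset.card_pos.mp hScard1
  rw [hSdef, Finset.mem_filter] at ha
  have hwR : w ∉ R := by
    intro hwR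
    have := hA w hwR
    have haw : a ∈ Nv.erase w := this ▸ ha.1
    exact ha.2 (Finset.mem_of_mem_erase haw)
  -- the product sets inject into the non-adjacent pairs of N(w)
  set Qw := (Finset.univ.filter fun p : V × V =>
      G.Adj w p.1 ∧ G.Adj w p.2 ∧ p.1 ≠ p.2 ∧ ¬ G.Adj p.1 p.2) with hQw
  have hSR : ∀ s ∈ S, ∀ u ∈ R, G.Adj w s ∧ G.Adj w u ∧ s ≠ u ∧ ¬ G.Adj s u := by
    intro s hs u hu
    rw [hSdef, Finset.mem_filter, SimpleGraph.mem_neighborFinset] at hs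
    have huR := hu
    rw [hRdef, Finset.mem_filter] at hu
    have hsu : s ≠ u := by
      intro h; exact hs.2 (h ▸ hu.1)
    have hadjwu : G.Adj w u := by
      have hne : w ≠ u := fun h => hwR (h ▸ huR)
      exact G.adj_symm (hu.2 w hw hne)
    have hnadj : ¬ G.Adj s u := by
      intro h
      have : s ∈ G.neighborFinset u := by
        rw [SimpleGraph.mem_neighborFinset]; exact G.adj_symm h
      rw [hA u huR] at this
      exact hs.2 (Finset.mem_of_mem_erase this)
    exact ⟨hs.1, hadjwu, hsu, hnadj⟩
  have hsub : (S ×ˢ R) ∪ (R ×ˢ S) ⊆ Qw := by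
    intro p hp
    rw [hQw, Finset.mem_filter]
    refine ⟨Finset.mem_univ _, ?_⟩
    rcases Finset.mem_union.mp hp with h | h
    · rw [Finset.mem_product] at h
      exact hSR p.1 h.1 p.2 h.2
    · rw [Finset.mem_product] at h
      obtain ⟨h1, h2, h3, h4⟩ := hSR p.2 h.2 p.1 h.1
      exact ⟨h2, h1, h3.symm, fun hh => h4 (G.adj_symm hh)⟩
  have hdisjSR : Disjoint (S ×ˢ R) (R ×ˢ S) := by
    rw [Finset.disjoint_left]
    intro p hp hq
    rw [Finset.mem_product] at hp hq
    have h1 := hp.1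
    rw [hSdef, Finset.mem_filter] at h1
    have h2 := hq.1
    rw [hRdef, Finset.mem_filter] at h2
    exact h1.2 h2.1
  have hcount : 2 * (S.card * R.card) ≤ 2 * k := by
    have h1 := Finset.card_le_card hsub
    rw [Finset.card_union_of_disjoint hdisjSR, Finset.card_product,
      Finset.card_product, key w] at h1
    have hcomm : R.card * S.card = S.card * R.card := Nat.mul_comm _ _
    omega
  -- final numeric contradiction
  have hst : S.card * R.card ≤ k := by omega
  have htR : 3 ≤ R.card := by omega
  have hfin : (k + 1) * 3 ≤ 3 * k := by
    calc (k + 1) * 3 ≤ (k + 1) * R.card := Nat.mul_le_mul_left _ htR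
      _ ≤ (3 * S.card) * R.card := Nat.mul_le_mul_right _ hs3
      _ = 3 * (S.card * R.card) := by ring
      _ ≤ 3 * k := Nat.mul_le_mul_left _ hst
  omega
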